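/- Pinched estimators dominate for block-diagonal states (Corollary 6, finite-dimensional form): let N be a finite index set, (Π_n)_{n∈N} Hermitian projection matrices with Π_n·Π_m = 0 for n ≠ m and Σ_n Π_n = 1, and let ρ be a density matrix commuting with every Π_n. Then for every Hermitian matrix B and every real number a: Re tr((Σ_n Π_n·B·Π_n − a·1)²·ρ) ≤ Re tr((B − a·1)²·ρ). -/

import Mathlib

open Matrix BigOperators ComplexOrder

noncomputable section

/-- A density matrix: positive semidefinite (hence Hermitian) with unit trace. -/
def IsDensity {d : Type*} [Fintype d] [DecidableEq d] (ρ : Matrix d d ℂ) : Prop :=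
  ρ.PosSemidef ∧ ρ.trace = 1

/-- The Jordan-product map `E_ρ(A) = (ρA + Aρ)/2`. -/
def jordan {d : Type*} [Fintype d] (ρ A : Matrix d d ℂ) : Matrix d d ℂ :=
  ((1 : ℂ)/2) • (ρ * A + A * ρ)

/-- The weighted squared norm `‖A‖²_ρ = Re tr(A² ρ)`. -/
def nsq {d : Type*} [Fintype d] (ρ A : Matrix d d ℂ) : ℝ :=
  (Matrix.trace (A * A * ρ)).re

/-- The channel `F(X) = Σ_i K_i X K_iᴴ` determined by a Kraus family. -/
def krausMap {n m ι : Type*} [Fintype n] [Fintype m] [Fintype ι]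
    (K : ι → Matrix m n ℂ) (X : Matrix n n ℂ) : Matrix m m ℂ :=
  ∑ i, K i * X * (K i)ᴴ

/-- The Hilbert–Schmidt adjoint `F*(Y) = Σ_i K_iᴴ Y K_i`. -/
def krausAdj {n m ι : Type*} [Fintype n] [Fintype m] [Fintype ι]
    (K : ι → Matrix m n ℂ) (Y : Matrix m m ℂ) : Matrix n n ℂ :=
  ∑ i, (K i)ᴴ * Y * K i

/-- Trace preservation: `Σ_i K_iᴴ K_i = 1`. -/
def TracePreserving {n m ι : Type*} [Fintype n] [DecidableEq n] [Fintype m] [Fintype ι]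
    (K : ι → Matrix m n ℂ) : Prop :=
  ∑ i, (K i)ᴴ * K i = 1

/-- The divergence `D_{σ,F}(A,B) = ‖A‖²_σ − 2 Re tr(F*(B)·E_σ(A)) + ‖B‖²_{F(σ)}`. -/
def Dvg {n m ι : Type*} [Fintype n] [Fintype m] [Fintype ι]
    (σ : Matrix n n ℂ) (K : ι → Matrix m n ℂ) (A : Matrix n n ℂ) (B : Matrix m m ℂ) : ℝ :=
  nsq σ A - 2 * (Matrix.trace (krausAdj K B * jordan σ A)).re + nsq (krausMap K σ) B

/-- `B` solves the Jordan GCE equation for `(σ, F, A)`: `E_{F(σ)}(B) = F(E_σ(A))`. -/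
def SolvesGCE {n m ι : Type*} [Fintype n] [Fintype m] [Fintype ι]
    (σ : Matrix n n ℂ) (K : ι → Matrix m n ℂ) (A : Matrix n n ℂ) (B : Matrix m m ℂ) : Prop :=
  jordan (krausMap K σ) B = krausMap K (jordan σ A)


lemma psd_trace_re_nonneg {d : Type*} [Fintype d] [DecidableEq d] {M : Matrix d d ℂ}
    (hM : M.PosSemidef) : 0 ≤ (M.trace).re := by
  have h : ∀ i, 0 ≤ M i i := by
    intro i
    exact hM.diag_nonneg
  have : (0:ℂ) ≤ M.trace := by
    unfold Matrix.trace
    exact Finset.sum_nonneg fun i _ => h i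
  exact (Complex.le_def.mp this).1

lemma pinch_trace_adj {d N : Type*} [Fintype d] [Fintype N]
    (Pr : N → Matrix d d ℂ) (A X : Matrix d d ℂ) :
    Matrix.trace (A * ∑ i, Pr i * X * Pr i) =
    Matrix.trace ((∑ i, Pr i * A * Pr i) * X) := by
  rw [Matrix.mul_sum, Matrix.sum_mul, trace_sum, trace_sum]
  refine Finset.sum_congr rfl fun i _ => ?_
  rw [show A * (Pr i * X * Pr i) = A * (Pr i * X) * Pr i by noncomm_ring,
      trace_mul_cycle, show Pr i * A * Pr i * X = Pr i * A * (Pr i * X) by noncomm_ring]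

/-- Pinched estimators dominate for block-diagonal states. -/
theorem pinched_estimator_dominates {d N : Type*} [Fintype d] [DecidableEq d] [Fintype N]
    (Pr : N → Matrix d d ℂ)
    (hPrherm : ∀ i, (Pr i).IsHermitian)
    (hPrproj : ∀ i, Pr i * Pr i = Pr i)
    (hProrth : ∀ i j, i ≠ j → Pr i * Pr j = 0)
    (hPrsum : ∑ i, Pr i = 1)
    (ρ : Matrix d d ℂ) (hρ : IsDensity ρ)
    (hcomm : ∀ i, ρ * Pr i = Pr i * ρ)
    (B : Matrix d d ℂ) (hB : B.IsHermitian) (a : ℝ) :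
    (Matrix.trace (((∑ i, Pr i * B * Pr i) - (a : ℂ) • 1)
        * ((∑ i, Pr i * B * Pr i) - (a : ℂ) • 1) * ρ)).re ≤
      (Matrix.trace ((B - (a : ℂ) • 1) * (B - (a : ℂ) • 1) * ρ)).re := by
  obtain ⟨hpsd, -⟩ := hρ
  set C : Matrix d d ℂ := B - (a : ℂ) • 1 with hCdef
  set PC : Matrix d d ℂ := ∑ i, Pr i * C * Pr i with hPCdef
  have hA : (∑ i, Pr i * B * Pr i) - (a : ℂ) • 1 = PC := by
    have : PC = (∑ i, Pr i * B * Pr i) - (a : ℂ) • ∑ i, Pr i := by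
      rw [hPCdef, Finset.smul_sum, ← Finset.sum_sub_distrib]
      refine Finset.sum_congr rfl fun i _ => ?_
      rw [hCdef, Matrix.mul_sub, Matrix.sub_mul, Matrix.mul_smul, Matrix.mul_one,
        Matrix.smul_mul, hPrproj i]
    rw [this, hPrsum]
  have hCH : Cᴴ = C := by
    rw [hCdef, conjTranspose_sub, hB.eq, conjTranspose_smul, conjTranspose_one]
    norm_num
  have hPCH : PCᴴ = PC := by
    rw [hPCdef, conjTranspose_sum]
    refine Finset.sum_congr rfl fun i _ => ?_
    rw [conjTranspose_mul, conjTranspose_mul, (hPrherm i).eq, hCH]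
    noncomm_ring
  have hPPC : (∑ i, Pr i * PC * Pr i) = PC := by
    rw [hPCdef]
    refine Finset.sum_congr rfl fun i _ => ?_
    rw [Matrix.mul_sum, Matrix.sum_mul, Finset.sum_eq_single i]
    · rw [show Pr i * (Pr i * C * Pr i) * Pr i = (Pr i * Pr i) * C * (Pr i * Pr i) by
        noncomm_ring, hPrproj i]
    · intro j _ hj
      rw [show Pr i * (Pr j * C * Pr j) * Pr i = (Pr i * Pr j) * C * (Pr j * Pr i) by
        noncomm_ring, hProrth i j (Ne.symm hj)]
      simp
    · intro h; exact absurd (Finset.mem_univ i) h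
  set Q : Matrix d d ℂ := C - PC with hQdef
  have hQH : Qᴴ = Q := by rw [hQdef, conjTranspose_sub, hCH, hPCH]
  have hQpinch : (∑ i, Pr i * Q * Pr i) = 0 := by
    have : (∑ i, Pr i * Q * Pr i) = (∑ i, Pr i * C * Pr i) - (∑ i, Pr i * PC * Pr i) := by
      rw [← Finset.sum_sub_distrib]
      refine Finset.sum_congr rfl fun i _ => ?_
      rw [hQdef]; noncomm_ring
    rw [this, hPPC, hPCdef, sub_self]
  have hρPC : ρ * PC = ∑ i, Pr i * (ρ * C) * Pr i := by
    rw [hPCdef, Matrix.mul_sum]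
    refine Finset.sum_congr rfl fun i _ => ?_
    rw [show ρ * (Pr i * C * Pr i) = (ρ * Pr i) * C * Pr i by noncomm_ring, hcomm i]
    noncomm_ring
  have hPCρ : PC * ρ = ∑ i, Pr i * (C * ρ) * Pr i := by
    rw [hPCdef, Matrix.sum_mul]
    refine Finset.sum_congr rfl fun i _ => ?_
    rw [show Pr i * C * Pr i * ρ = Pr i * C * (Pr i * ρ) by noncomm_ring, ← hcomm i]
    noncomm_ring
  have hcross1 : Matrix.trace (PC * Q * ρ) = 0 := by
    rw [trace_mul_cycle, trace_mul_cycle, Matrix.mul_assoc, hρPC,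
      pinch_trace_adj, hQpinch, Matrix.zero_mul, trace_zero]
  have hcross2 : Matrix.trace (Q * PC * ρ) = 0 := by
    rw [show Q * PC * ρ = Q * (PC * ρ) from Matrix.mul_assoc _ _ _, trace_mul_comm,
      hPCρ, trace_mul_comm, pinch_trace_adj, hQpinch, Matrix.zero_mul, trace_zero]
  have hQQ : 0 ≤ (Matrix.trace (Q * Q * ρ)).re := by
    have : Matrix.trace (Qᴴ * ρ * Q) = Matrix.trace (Q * Q * ρ) := by
      rw [trace_mul_cycle, hQH]
    rw [← this]
    exact psd_trace_re_nonneg (hpsd.conjTranspose_mul_mul_same Q)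
  have hexp : Matrix.trace (C * C * ρ) =
      Matrix.trace (PC * PC * ρ) + Matrix.trace (PC * Q * ρ)
        + Matrix.trace (Q * PC * ρ) + Matrix.trace (Q * Q * ρ) := by
    rw [← trace_add, ← trace_add, ← trace_add]
    congr 1
    rw [hQdef]
    noncomm_ring
  rw [hA, hexp]
  simp only [Complex.add_re, hcross1, hcross2, Complex.zero_re, add_zero]
  linarith
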